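/- For rational α = p/q ∈ (0,1) in lowest terms with q ≥ 2, one has min_{l ∈ {0,…,q−1}} ‖lα − 1/2‖_N ≤ 1/6, and equality holds if and only if α = 1/3 or α = 2/3. -/
import Mathlib

/-- Distance from a real number to the nearest integer. -/
noncomputable def distNearestInt (x : ℝ) : ℝ := ⨅ k : ℤ, |x - (k : ℝ)|

lemma distNearestInt_nonneg (x : ℝ) : 0 ≤ distNearestInt x :=
  le_ciInf fun _ => abs_nonneg _

lemma distNearestInt_le (x : ℝ) (k : ℤ) : distNearestInt x ≤ |x - k| :=
  ciInf_le ⟨0, by rintro y ⟨i, rfl⟩; exact abs_nonneg _⟩ k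

lemma le_distNearestInt {x c : ℝ} (b : ℤ) (h1 : c ≤ x - b) (h2 : c ≤ (b + 1) - x) :
    c ≤ distNearestInt x := by
  refine le_ciInf fun k => ?_
  rcases le_or_gt k b with h | h
  · have : (k : ℝ) ≤ b := by exact_mod_cast h
    exact le_abs.mpr (Or.inl (by linarith))
  · have : (b : ℝ) + 1 ≤ k := by exact_mod_cast h
    exact le_abs.mpr (Or.inr (by linarith))

lemma exists_mul_mod (p q r : ℕ) (hq : 0 < q) (hcop : Nat.Coprime p q) (hr : r < q) :
    ∃ l : ℕ, l < q ∧ (l * p) % q = r := by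
  haveI : NeZero q := ⟨hq.ne'⟩
  set u : ZMod q := (r : ZMod q) * (p : ZMod q)⁻¹ with hu
  refine ⟨u.val, u.val_lt, ?_⟩
  have h1 : ((u.val * p : ℕ) : ZMod q) = (r : ZMod q) := by
    push_cast
    rw [ZMod.natCast_val, ZMod.cast_id]
    rw [hu, mul_assoc, ZMod.inv_mul_of_unit, mul_one]
    exact (ZMod.unitOfCoprime p hcop).isUnit
  have := congrArg ZMod.val h1
  rwa [ZMod.val_natCast, ZMod.val_natCast_of_lt hr] at this

lemma inf_le_r (p q : ℕ) (hq : 2 ≤ q) (hcop : Nat.Coprime p q) (r : ℕ) (hr : r < q) :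
    (⨅ l : Fin q, distNearestInt ((l : ℝ) * ((p : ℝ) / q) - 1 / 2)) ≤
      |(r : ℝ) / q - 1 / 2| := by
  obtain ⟨l, hl, hmod⟩ := exists_mul_mod p q r (by omega) hcop hr
  have hdiv : l * p = q * (l * p / q) + r := by
    conv_lhs => rw [← Nat.div_add_mod (l * p) q]
    rw [hmod]
  set t : ℕ := l * p / q with ht
  have hqR : (0:ℝ) < q := by positivity
  have hlp : (l : ℝ) * (p : ℝ) = q * t + r := by exact_mod_cast hdiv
  have hx : (l : ℝ) * ((p : ℝ) / q) - 1 / 2 - (t : ℝ) = (r : ℝ) / q - 1 / 2 := by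
    rw [← mul_div_assoc, hlp, add_div, mul_div_cancel_left₀ _ hqR.ne']
    ring
  have step1 : (⨅ l : Fin q, distNearestInt ((l : ℝ) * ((p : ℝ) / q) - 1 / 2))
      ≤ distNearestInt (((⟨l, hl⟩ : Fin q) : ℝ) * ((p : ℝ) / q) - 1 / 2) := by
    apply ciInf_le
    refine ⟨0, ?_⟩
    rintro y ⟨i, rfl⟩
    exact distNearestInt_nonneg _
  have step2 := distNearestInt_le (((⟨l, hl⟩ : Fin q) : ℝ) * ((p : ℝ) / q) - 1 / 2) (t : ℤ)
  have hcoe : ((⟨l, hl⟩ : Fin q) : ℝ) = (l : ℝ) := by norm_num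
  rw [hcoe] at step1 step2
  rw [show ((((t : ℕ) : ℤ)) : ℝ) = (t : ℝ) by push_cast; ring, hx] at step2
  exact le_trans step1 step2

/-- For rational `α = p/q ∈ (0,1)` in lowest terms with `q ≥ 2`,
`min_{0 ≤ l < q} ‖lα − 1/2‖_N ≤ 1/6`, with equality iff `α = 1/3` or `α = 2/3`. -/
theorem rational_dist_half_le_sixth (p q : ℕ) (hq : 2 ≤ q) (hcop : Nat.Coprime p q)
    (α : ℝ) (hα : α = (p : ℝ) / q) (hmem : α ∈ Set.Ioo (0 : ℝ) 1) :
    (⨅ l : Fin q, distNearestInt (l * α - 1 / 2)) ≤ 1 / 6 ∧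
      ((⨅ l : Fin q, distNearestInt (l * α - 1 / 2)) = 1 / 6 ↔ α = 1 / 3 ∨ α = 2 / 3) := by
  subst hα
  obtain ⟨hmem0, hmem1⟩ := hmem
  have hqR : (0:ℝ) < q := by positivity
  have hp0 : 0 < p := by
    by_contra h
    push_neg at h
    interval_cases p
    norm_num at hmem0
  have hpq : p < q := by
    have : (p : ℝ) < q := by
      rw [div_lt_one hqR] at hmem1
      exact hmem1
    exact_mod_cast this
  haveI : Nonempty (Fin q) := ⟨⟨0, by omega⟩⟩
  have hinf0 : 0 ≤ ⨅ l : Fin q, distNearestInt ((l : ℝ) * ((p : ℝ) / q) - 1 / 2) :=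
    le_ciInf fun _ => distNearestInt_nonneg _
  -- from α = 1/3 or 2/3 derive p, q
  have hq3 : ((p:ℝ)/q = 1/3 ∨ (p:ℝ)/q = 2/3) → (p = 1 ∧ q = 3) ∨ (p = 2 ∧ q = 3) := by
    rintro (h | h)
    · have h3 : 3 * p = q := by
        have : (3:ℝ) * p = q := by
          field_simp at h
          linarith
        exact_mod_cast this
      have hdvd : p ∣ Nat.gcd p q := Nat.dvd_gcd dvd_rfl ⟨3, by omega⟩
      rw [hcop] at hdvd
      left
      have hp1 : p = 1 := Nat.eq_one_of_dvd_one hdvd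
      omega
    · have h3 : 3 * p = 2 * q := by
        have : (3:ℝ) * p = 2 * q := by
          field_simp at h
          linarith
        exact_mod_cast this
      have hdvd : p ∣ 2 * q := ⟨3, by omega⟩
      have hp2 : p ∣ 2 := (Nat.Coprime.dvd_of_dvd_mul_right hcop) hdvd
      have := Nat.le_of_dvd (by norm_num) hp2
      right
      omega
  rcases Nat.even_or_odd q with ⟨s, hs⟩ | ⟨s, hs⟩
  · -- q even : infimum is 0
    have hs1 : 1 ≤ s := by omega
    have hle0 : (⨅ l : Fin q, distNearestInt ((l : ℝ) * ((p : ℝ) / q) - 1 / 2)) ≤ 0 := by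
      have := inf_le_r p q hq hcop s (by omega)
      have habs : |(s : ℝ) / q - 1 / 2| = 0 := by
        have hq' : (q : ℝ) = 2 * s := by exact_mod_cast (by omega : q = 2 * s)
        rw [hq']
        rw [abs_eq_zero]
        have hsR : (0:ℝ) < s := by exact_mod_cast hs1
        field_simp
        ring
      rwa [habs] at this
    have heq0 : (⨅ l : Fin q, distNearestInt ((l : ℝ) * ((p : ℝ) / q) - 1 / 2)) = 0 :=
      le_antisymm hle0 hinf0
    refine ⟨by rw [heq0]; norm_num, ?_, ?_⟩
    · intro h
      rw [heq0] at h
      norm_num at h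
    · intro h
      rcases hq3 h with ⟨_, hq3'⟩ | ⟨_, hq3'⟩ <;> omega
  · -- q odd : infimum is 1/(2q)
    have hs1 : 1 ≤ s := by omega
    have hupper : (⨅ l : Fin q, distNearestInt ((l : ℝ) * ((p : ℝ) / q) - 1 / 2)) ≤
        1 / (2 * q) := by
      have := inf_le_r p q hq hcop s (by omega)
      have habs : |(s : ℝ) / q - 1 / 2| = 1 / (2 * q) := by
        have hq' : (q : ℝ) = 2 * s + 1 := by exact_mod_cast (by omega : q = 2 * s + 1)
        have hval : (s : ℝ) / q - 1 / 2 = -(1 / (2 * q)) := by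
          rw [hq']
          have hsR : (0:ℝ) ≤ s := by positivity
          field_simp
          ring
        rw [hval, abs_neg, abs_of_nonneg (by positivity)]
      rwa [habs] at this
    have hq3' : (3:ℝ) ≤ q := by exact_mod_cast (by omega : 3 ≤ q)
    constructor
    · refine le_trans hupper ?_
      rw [div_le_div_iff₀ (by positivity) (by norm_num)]
      linarith
    constructor
    · intro h
      rw [h] at hupper
      have hq_le : (q:ℝ) ≤ 3 := by
        rw [div_le_div_iff₀ (by norm_num) (by positivity)] at hupper
        linarith
      have hq_eq : q = 3 := by
        have : q ≤ 3 := by exact_mod_cast hq_le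
        omega
      subst hq_eq
      interval_cases p
      · left; norm_num
      · right; norm_num
    · intro h
      rcases hq3 h with ⟨hp', hq'⟩ | ⟨hp', hq'⟩ <;> subst hp' <;> subst hq'
      · refine le_antisymm (le_trans hupper (by norm_num)) ?_
        refine le_ciInf fun l => ?_
        fin_cases l
        · refine le_distNearestInt (-1) ?_ ?_ <;> norm_num
        · refine le_distNearestInt (-1) ?_ ?_ <;> norm_num
        · refine le_distNearestInt 0 ?_ ?_ <;> norm_num
      · refine le_antisymm (le_trans hupper (by norm_num)) ?_
        refine le_ciInf fun l => ?_
        fin_cases l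
        · refine le_distNearestInt (-1) ?_ ?_ <;> norm_num
        · refine le_distNearestInt 0 ?_ ?_ <;> norm_num
        · refine le_distNearestInt 0 ?_ ?_ <;> norm_num
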